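/- arXiv:1201.3932 — 5 statements merged into one kernel-verified Lean document; each statement's English description precedes it below -/
import Mathlib

section
/- Let κ = 1/√5, a₀ = (√5-1)/2, b₀ = (1+√5)/2, c₀ = 1, and define g(x) = κ(a₀/(a₀²+x²) + b₀/(b₀²+x²)) - c₀/(c₀²+x²). Then g(x) ≤ 0 for all real x. -/
/-!
Write `a = (√5 - 1)/2` and `b = (1 + √5)/2`, so that `a + b = √5` and `a b = 1`. For `t = x² ≥ 0`,
`a/(a² + t) + b/(b² + t) = (a + b)(ab + t)/((a² + t)(b² + t))`, and
`(a² + t)(b² + t) - (ab + t)² = (a - b)² t ≥ 0`; hence the mean of the two Lorentzians weighted by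
`1/(a + b)` is at most the Lorentzian `1/(ab + t)`.
-/

theorem sq_mul_add_le_mul_sq_add (a b : ℝ) {t : ℝ} (ht : 0 ≤ t) :
    (a * b + t) ^ 2 ≤ (a ^ 2 + t) * (b ^ 2 + t) := by
  nlinarith [mul_nonneg (sq_nonneg (a - b)) ht]

theorem div_sq_add_add_div_sq_add {a b t : ℝ} (ha : a ^ 2 + t ≠ 0) (hb : b ^ 2 + t ≠ 0) :
    a / (a ^ 2 + t) + b / (b ^ 2 + t) = (a + b) * (a * b + t) / ((a ^ 2 + t) * (b ^ 2 + t)) := by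
  field_simp
  ring

theorem div_sq_add_add_div_sq_add_div_le {a b t : ℝ} (ha : 0 < a) (hb : 0 < b) (ht : 0 ≤ t) :
    (a / (a ^ 2 + t) + b / (b ^ 2 + t)) / (a + b) ≤ 1 / (a * b + t) := by
  have hat : 0 < a ^ 2 + t := by positivity
  have hbt : 0 < b ^ 2 + t := by positivity
  have habt : 0 < a * b + t := by positivity
  rw [div_sq_add_add_div_sq_add hat.ne' hbt.ne', mul_div_assoc, mul_div_cancel_left₀ _ (by positivity),
    div_le_div_iff₀ (by positivity) habt, one_mul, ← sq]
  exact sq_mul_add_le_mul_sq_add a b ht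

theorem stmt_1 (x : ℝ) :
    (1 / Real.sqrt 5) *
        ((Real.sqrt 5 - 1) / 2 / (((Real.sqrt 5 - 1) / 2) ^ 2 + x ^ 2) +
          (1 + Real.sqrt 5) / 2 / (((1 + Real.sqrt 5) / 2) ^ 2 + x ^ 2)) -
      1 / (1 + x ^ 2) ≤ 0 := by
  have hsq : Real.sqrt 5 ^ 2 = 5 := Real.sq_sqrt (by norm_num)
  have hsqrt_gt_one : 1 < Real.sqrt 5 := by nlinarith [Real.sqrt_nonneg 5]
  have hmul : (Real.sqrt 5 - 1) / 2 * ((1 + Real.sqrt 5) / 2) = 1 := by linear_combination hsq / 4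
  have hadd : (Real.sqrt 5 - 1) / 2 + (1 + Real.sqrt 5) / 2 = Real.sqrt 5 := by ring
  have key := div_sq_add_add_div_sq_add_div_le (t := x ^ 2) (by linarith : 0 < (Real.sqrt 5 - 1) / 2)
    (by positivity : 0 < (1 + Real.sqrt 5) / 2) (sq_nonneg x)
  rw [hmul, hadd] at key
  rwa [sub_nonpos, one_div_mul_eq_div]
end

section
/- Let κ = 1/√5, a₀ = (√5-1)/2, b₀ = (1+√5)/2, c₀ = 1, and define g(x) = κ(a₀/(a₀²+x²) + b₀/(b₀²+x²)) - c₀/(c₀²+x²). Then g(x) ≥ -0.1216 for all real x. -/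
theorem stmt_2 (x : ℝ) :
    -0.1216 ≤ (1 / Real.sqrt 5) *
        ((Real.sqrt 5 - 1) / 2 / (((Real.sqrt 5 - 1) / 2) ^ 2 + x ^ 2) +
          (1 + Real.sqrt 5) / 2 / (((1 + Real.sqrt 5) / 2) ^ 2 + x ^ 2)) -
      1 / (1 + x ^ 2) := by
  have hs : Real.sqrt 5 ^ 2 = 5 := Real.sq_sqrt (by norm_num)
  have hs2 : 2 < Real.sqrt 5 := by nlinarith [Real.sqrt_nonneg 5]
  have ht0 : (0:ℝ) ≤ x ^ 2 := sq_nonneg x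
  set t := x ^ 2 with ht
  have hs3 : Real.sqrt 5 < 3 := by nlinarith
  have e1 : ((Real.sqrt 5 - 1)/2) ^ 2 + t = (3 - Real.sqrt 5)/2 + t := by
    linear_combination (1/4 : ℝ) * hs
  have e2 : ((1 + Real.sqrt 5)/2) ^ 2 + t = (3 + Real.sqrt 5)/2 + t := by
    linear_combination (1/4 : ℝ) * hs
  have hd1 : (0:ℝ) < (3 - Real.sqrt 5)/2 + t := by linarith
  have hd2 : (0:ℝ) < (3 + Real.sqrt 5)/2 + t := by linarith
  have hd3 : (0:ℝ) < 1 + t := by linarith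
  have hd4 : (0:ℝ) < 1 + 3*t + t^2 := by nlinarith
  have hs0 : Real.sqrt 5 ≠ 0 := by positivity
  have A : (Real.sqrt 5 - 1) / 2 / ((3 - Real.sqrt 5)/2 + t) +
      (1 + Real.sqrt 5) / 2 / ((3 + Real.sqrt 5)/2 + t) =
      Real.sqrt 5 * (1 + t) / (1 + 3*t + t^2) := by
    rw [div_add_div _ _ hd1.ne' hd2.ne']
    have hnum : (Real.sqrt 5 - 1) / 2 * ((3 + Real.sqrt 5)/2 + t) +
        ((3 - Real.sqrt 5)/2 + t) * ((1 + Real.sqrt 5) / 2) = Real.sqrt 5 * (1 + t) := by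
      ring
    have hden : ((3 - Real.sqrt 5)/2 + t) * ((3 + Real.sqrt 5)/2 + t) = 1 + 3*t + t^2 := by
      linear_combination (-(1/4) : ℝ) * hs
    rw [hnum, hden]
  have key : (1 / Real.sqrt 5) *
        ((Real.sqrt 5 - 1) / 2 / (((Real.sqrt 5 - 1) / 2) ^ 2 + t) +
          (1 + Real.sqrt 5) / 2 / (((1 + Real.sqrt 5) / 2) ^ 2 + t)) -
      1 / (1 + t) = -t / ((1 + 3*t + t^2) * (1 + t)) := by
    rw [e1, e2, A]
    field_simp
    ring
  rw [key, neg_div, neg_le_neg_iff, div_le_iff₀ (by positivity)]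
  nlinarith [mul_nonneg ht0 (sq_nonneg (t - 0.4515)), sq_nonneg (t - 0.4515)]
end

section
/- Let 0 < ε ≤ 1/100, a₀ = (√5-1)/2, b₀ = (1+√5)/2, c₀ = 1, κ = 1/√5, and define g(a,b,c;x) = κ(a/(a²+x²) + b/(b²+x²)) - c/(c²+x²). If a,b,c are real numbers with |a-a₀| < 2ε, |b-b₀| < 2ε, |c-c₀| < 2ε, then for all real x one has -0.121586 - 5ε ≤ g(a,b,c;x) ≤ 5ε. -/
/-!
Since `φ⁻¹ * φ = 1` and `φ⁻¹ + φ = √5`, the unperturbed function collapses to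
`g φ⁻¹ φ 1 x = -x² / ((1 + 3x² + x⁴)(1 + x²))`, which takes values in `[-0.121586, 0]`.
Each kernel `u ↦ u / (u² + x²)` moves by at most `|u - v| / (u v)` between positive points
`u, v`, uniformly in `x`. With `a φ⁻¹ ≥ 0.369`, `b φ ≥ 2.58`, `c ≥ 0.98` and `1 / √5 < 0.4473`,
moving `(a, b, c)` by less than `2ε` therefore moves `g` by at most
`(0.4473 (2 / 0.369 + 2 / 2.58) + 2 / 0.98) ε ≤ 5ε`.
-/

open Real goldenRatio

noncomputable def g (a b c x : ℝ) : ℝ :=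
  1 / √5 * (a / (a ^ 2 + x ^ 2) + b / (b ^ 2 + x ^ 2)) - c / (c ^ 2 + x ^ 2)

theorem abs_div_sq_add_sq_sub_div_sq_add_sq_le {u v : ℝ} (hu : 0 < u) (hv : 0 < v) (x : ℝ) :
    |u / (u ^ 2 + x ^ 2) - v / (v ^ 2 + x ^ 2)| ≤ |u - v| / (u * v) := by
  have hUV : 0 < (u ^ 2 + x ^ 2) * (v ^ 2 + x ^ 2) := by positivity
  have hdiff : u / (u ^ 2 + x ^ 2) - v / (v ^ 2 + x ^ 2)
      = (u - v) * (x ^ 2 - u * v) / ((u ^ 2 + x ^ 2) * (v ^ 2 + x ^ 2)) := by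
    field_simp
    ring
  have hnum : |x ^ 2 - u * v| * (u * v) ≤ (u ^ 2 + x ^ 2) * (v ^ 2 + x ^ 2) := by
    cases abs_cases (x ^ 2 - u * v) <;>
      nlinarith [sq_nonneg (u - v), sq_nonneg x, mul_pos hu hv, sq_nonneg (x * (u - v))]
  rw [hdiff, abs_div, abs_mul, abs_of_pos hUV, div_le_div_iff₀ hUV (by positivity), mul_assoc]
  gcongr

theorem abs_div_sq_add_sq_sub_div_sq_add_sq_le_of_le {u v δ m : ℝ} (hu : 0 < u) (hv : 0 < v)
    (h : |u - v| ≤ δ) (hm : 0 < m) (hmuv : m ≤ u * v) (x : ℝ) :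
    |u / (u ^ 2 + x ^ 2) - v / (v ^ 2 + x ^ 2)| ≤ δ / m :=
  (abs_div_sq_add_sq_sub_div_sq_add_sq_le hu hv x).trans
    (div_le_div₀ ((abs_nonneg _).trans h) h hm hmuv)

theorem div_sq_add_sq_add_div_sq_add_sq_of_mul_eq_one {a b : ℝ} (hab : a * b = 1) (x : ℝ) :
    a / (a ^ 2 + x ^ 2) + b / (b ^ 2 + x ^ 2)
      = (a + b) * (1 + x ^ 2) / (1 + ((a + b) ^ 2 - 2) * x ^ 2 + x ^ 4) := by
  have ha : a ≠ 0 := left_ne_zero_of_mul_eq_one hab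
  have hb : b ≠ 0 := right_ne_zero_of_mul_eq_one hab
  have hA : a ^ 2 + x ^ 2 ≠ 0 := by positivity
  have hB : b ^ 2 + x ^ 2 ≠ 0 := by positivity
  have hAB : (a ^ 2 + x ^ 2) * (b ^ 2 + x ^ 2) = 1 + ((a + b) ^ 2 - 2) * x ^ 2 + x ^ 4 := by
    linear_combination (a * b + 1 - 2 * x ^ 2) * hab
  rw [div_add_div _ _ hA hB, hAB]
  congr 1
  linear_combination (a + b) * hab

theorem g_golden (x : ℝ) :
    g φ⁻¹ φ 1 x = -(x ^ 2 / ((1 + 3 * x ^ 2 + x ^ 4) * (1 + x ^ 2))) := by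
  have h5 : √5 ^ 2 = 5 := sq_sqrt (by norm_num)
  rw [g, div_sq_add_sq_add_div_sq_add_sq_of_mul_eq_one (inv_mul_cancel₀ goldenRatio_ne_zero),
    inv_goldenRatio, ← sub_eq_neg_add, goldenRatio_sub_goldenConj, h5]
  field_simp
  ring

/- The maximum over `t ≥ 0` is attained at the root `t ≈ 0.4516` of `2t³ + 4t² = 1`, where the
squares of the certificate are centred. -/
theorem div_one_add_three_mul_add_sq_mul_one_add_le {t : ℝ} (ht : 0 ≤ t) :
    t / ((1 + 3 * t + t ^ 2) * (1 + t)) ≤ 0.121586 := by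
  rw [div_le_iff₀ (by positivity)]
  nlinarith [mul_nonneg ht (sq_nonneg (t - 0.451602)), sq_nonneg (t - 0.451602)]

theorem g_golden_bounds (x : ℝ) : -0.121586 ≤ g φ⁻¹ φ 1 x ∧ g φ⁻¹ φ 1 x ≤ 0 := by
  have hmax : x ^ 2 / ((1 + 3 * x ^ 2 + x ^ 4) * (1 + x ^ 2)) ≤ 0.121586 := by
    simpa only [← pow_mul] using div_one_add_three_mul_add_sq_mul_one_add_le (sq_nonneg x)
  have hnonneg : 0 ≤ x ^ 2 / ((1 + 3 * x ^ 2 + x ^ 4) * (1 + x ^ 2)) := by positivity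
  rw [g_golden]
  constructor <;> linarith

theorem abs_g_sub_g_golden_le {ε a b c : ℝ} (hε : ε ≤ 1 / 100) (ha : |a - φ⁻¹| < 2 * ε)
    (hb : |b - φ| < 2 * ε) (hc : |c - 1| < 2 * ε) (x : ℝ) :
    |g a b c x - g φ⁻¹ φ 1 x| ≤ 5 * ε := by
  have hε₀ : 0 < ε := by linarith [abs_nonneg (c - 1)]
  have h5 : 2.236 < √5 := by rw [lt_sqrt] <;> norm_num
  have hκ : 1 / √5 < 0.4473 := by rw [div_lt_iff₀ (by positivity)]; linarith
  have hφ : 1.618 < φ := by rw [goldenRatio]; linarith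
  have hφinv : 0.618 < φ⁻¹ := by rw [inv_goldenRatio, goldenConj]; linarith
  obtain ⟨ha₁, -⟩ := abs_lt.mp ha
  obtain ⟨hb₁, -⟩ := abs_lt.mp hb
  obtain ⟨hc₁, -⟩ := abs_lt.mp hc
  have hΔa := abs_div_sq_add_sq_sub_div_sq_add_sq_le_of_le (m := 0.369) (by linarith)
    (by linarith) ha.le (by norm_num) (by nlinarith) x
  have hΔb := abs_div_sq_add_sq_sub_div_sq_add_sq_le_of_le (m := 2.58) (by linarith)
    (by linarith) hb.le (by norm_num) (by nlinarith) x
  have hΔc := abs_div_sq_add_sq_sub_div_sq_add_sq_le_of_le (m := 0.98) (by linarith)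
    one_pos hc.le (by norm_num) (by linarith) x
  calc |g a b c x - g φ⁻¹ φ 1 x|
      = |1 / √5 * ((a / (a ^ 2 + x ^ 2) - φ⁻¹ / (φ⁻¹ ^ 2 + x ^ 2))
          + (b / (b ^ 2 + x ^ 2) - φ / (φ ^ 2 + x ^ 2)))
          - (c / (c ^ 2 + x ^ 2) - 1 / (1 ^ 2 + x ^ 2))| := by unfold g; ring_nf
    _ ≤ 1 / √5 * (|a / (a ^ 2 + x ^ 2) - φ⁻¹ / (φ⁻¹ ^ 2 + x ^ 2)|
          + |b / (b ^ 2 + x ^ 2) - φ / (φ ^ 2 + x ^ 2)|)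
          + |c / (c ^ 2 + x ^ 2) - 1 / (1 ^ 2 + x ^ 2)| := by
        refine (abs_sub _ _).trans ?_
        rw [abs_mul, abs_of_pos (by positivity)]
        gcongr
        exact abs_add_le _ _
    _ ≤ 0.4473 * (2 * ε / 0.369 + 2 * ε / 2.58) + 2 * ε / 0.98 := by gcongr
    _ = (0.4473 * (2 / 0.369 + 2 / 2.58) + 2 / 0.98) * ε := by ring
    _ ≤ 5 * ε := by gcongr; norm_num

theorem stmt_4_general (ε a b c : ℝ) (hε' : ε ≤ 1 / 100)
    (ha : |a - (Real.sqrt 5 - 1) / 2| < 2 * ε)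
    (hb : |b - (1 + Real.sqrt 5) / 2| < 2 * ε)
    (hc : |c - 1| < 2 * ε) (x : ℝ) :
    -0.121586 - 5 * ε ≤
        (1 / Real.sqrt 5) * (a / (a ^ 2 + x ^ 2) + b / (b ^ 2 + x ^ 2)) -
          c / (c ^ 2 + x ^ 2) ∧
      (1 / Real.sqrt 5) * (a / (a ^ 2 + x ^ 2) + b / (b ^ 2 + x ^ 2)) -
          c / (c ^ 2 + x ^ 2) ≤ 5 * ε := by
  have hφinv : (√5 - 1) / 2 = φ⁻¹ := by rw [inv_goldenRatio, goldenConj]; ring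
  rw [hφinv] at ha
  obtain ⟨hlow, hupp⟩ := abs_sub_le_iff.mp (abs_g_sub_g_golden_le hε' ha hb hc x)
  obtain ⟨hg₀low, hg₀upp⟩ := g_golden_bounds x
  change -0.121586 - 5 * ε ≤ g a b c x ∧ g a b c x ≤ 5 * ε
  constructor <;> linarith

theorem stmt_4 (ε a b c : ℝ) (hε : 0 < ε) (hε' : ε ≤ 1 / 100)
    (ha : |a - (Real.sqrt 5 - 1) / 2| < 2 * ε)
    (hb : |b - (1 + Real.sqrt 5) / 2| < 2 * ε)
    (hc : |c - 1| < 2 * ε) (x : ℝ) :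
    -0.121586 - 5 * ε ≤
        (1 / Real.sqrt 5) * (a / (a ^ 2 + x ^ 2) + b / (b ^ 2 + x ^ 2)) -
          c / (c ^ 2 + x ^ 2) ∧
      (1 / Real.sqrt 5) * (a / (a ^ 2 + x ^ 2) + b / (b ^ 2 + x ^ 2)) -
          c / (c ^ 2 + x ^ 2) ≤ 5 * ε :=
  stmt_4_general ε a b c hε' ha hb hc x
end

section
/- Let x₁, x₂ be positive reals with x₁ < x₂ and √5·x₁ > x₂. For any nonnegative integer n, the polynomial Q_n(y) = √5(n+x₁)((n+x₂)²+y²)² - (n+x₂)((n+x₁)²+y²)², viewed as a polynomial in y, is positive for all real y. -/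
/-!
Write `a = n + x₁` and `b = n + x₂`. Shifting by `n ≥ 0` preserves `a < b < √5 a` because
`√5 ≥ 1`, and `x₁ < x₂ < √5 x₁` already forces `x₁ > 0`. Then
`b (a² + y²)² < b (b² + y²)² ≤ √5 a (b² + y²)²`.
-/

lemma mul_sq_add_sq_sq_lt {a b c : ℝ} (ha : 0 ≤ a) (hab : a < b) (hbc : b ≤ c) (y : ℝ) :
    b * (a ^ 2 + y ^ 2) ^ 2 < c * (b ^ 2 + y ^ 2) ^ 2 := by
  have hsq : (a ^ 2 + y ^ 2) ^ 2 < (b ^ 2 + y ^ 2) ^ 2 := by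
    gcongr
  calc b * (a ^ 2 + y ^ 2) ^ 2 < b * (b ^ 2 + y ^ 2) ^ 2 :=
        mul_lt_mul_of_pos_left hsq (ha.trans_lt hab)
    _ ≤ c * (b ^ 2 + y ^ 2) ^ 2 := by gcongr

lemma add_lt_mul_add_of_lt_mul {s t u v : ℝ} (hs : 1 ≤ s) (ht : 0 ≤ t) (h : v < s * u) :
    t + v < s * (t + u) := by
  nlinarith

theorem stmt_5_general (x₁ x₂ : ℝ) (hlt : x₁ < x₂)
    (h5 : Real.sqrt 5 * x₁ > x₂) (n : ℕ) (y : ℝ) :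
    0 < Real.sqrt 5 * (n + x₁) * ((n + x₂) ^ 2 + y ^ 2) ^ 2 -
        (n + x₂) * ((n + x₁) ^ 2 + y ^ 2) ^ 2 := by
  have hs : 1 ≤ Real.sqrt 5 := Real.one_le_sqrt.mpr (by norm_num)
  have hx₁ : 0 < x₁ := by nlinarith
  rw [sub_pos]
  exact mul_sq_add_sq_sq_lt (by positivity) (by linarith)
    (add_lt_mul_add_of_lt_mul hs n.cast_nonneg h5).le y

theorem stmt_5 (x₁ x₂ : ℝ) (hx₁ : 0 < x₁) (hlt : x₁ < x₂)
    (h5 : Real.sqrt 5 * x₁ > x₂) (n : ℕ) (y : ℝ) :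
    0 < Real.sqrt 5 * (n + x₁) * ((n + x₂) ^ 2 + y ^ 2) ^ 2 -
        (n + x₂) * ((n + x₁) ^ 2 + y ^ 2) ^ 2 :=
  stmt_5_general x₁ x₂ hlt h5 n y
end

section
/- Fix θ with θ·tan(θ) well-defined, θ = the unique solution in (0,π/2) of sin²θ = (3/2)(1 - θ·cot θ). Then there is a unique such θ and it satisfies 1.2729 < θ < 1.2730. -/
/-!
Multiplying by `2 sin θ` turns the equation into `g θ = 0`, where
`g θ = 2 sin³ θ - 3 sin θ + 3 θ cos θ` (`sinCotDefect`). On `(0, 1]`, `g > 0` because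
`sin θ ≥ θ - θ³/6` and `sin θ - θ cos θ ≤ θ³/3`. On `[1, π/2]`, `g' θ = 3 sin θ (sin 2θ - θ) < 0`,
so `g` has at most one zero there, and it changes sign on `[1.2729, 1.2730]`; the values of `sin`
and `cos` at the two endpoints come from truncating their alternating Taylor series.
-/

open Real Finset
open scoped Nat

lemma antitone_pow_two_mul_add_div_factorial {x : ℝ} {k : ℕ} (hx : 0 ≤ x)
    (hxk : x ^ 2 ≤ (k + 1) * (k + 2)) :
    Antitone fun i : ℕ ↦ x ^ (2 * i + k) / (2 * i + k)! := by
  refine antitone_nat_of_succ_le fun i ↦ ?_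
  have hfac : ((2 * (i + 1) + k)! : ℝ) = (2 * i + k + 1) * (2 * i + k + 2) * (2 * i + k)! := by
    rw [show 2 * (i + 1) + k = 2 * i + k + 1 + 1 by ring, Nat.factorial_succ, Nat.factorial_succ]
    push_cast; ring
  have hratio : x ^ 2 ≤ (2 * i + k + 1) * (2 * i + k + 2) :=
    hxk.trans (by gcongr <;> linarith [(i.cast_nonneg : (0 : ℝ) ≤ i)])
  rw [hfac, pow_add, pow_add, show 2 * (i + 1) = 2 * i + 2 by ring, pow_add,
    div_le_div_iff₀ (by positivity) (by positivity)]
  have : 0 ≤ x ^ (2 * i) * x ^ k * ((2 * i + k)! : ℝ) := by positivity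
  nlinarith

lemma summable_pow_two_mul_add_div_factorial {x : ℝ} (k : ℕ) :
    Summable fun i : ℕ ↦ x ^ (2 * i + k) / (2 * i + k)! :=
  (Real.summable_pow_div_factorial x).comp_injective (i := fun i ↦ 2 * i + k)
    fun a b h ↦ by simpa using h

theorem abs_sin_sub_sum_le {x : ℝ} (hx : 0 ≤ x) (hx6 : x ^ 2 ≤ 6) (n : ℕ) :
    |sin x - ∑ i ∈ range n, (-1) ^ i * x ^ (2 * i + 1) / (2 * i + 1)!| ≤
      x ^ (2 * n + 1) / (2 * n + 1)! := by
  have := alternating_series_error_bound _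
    (antitone_pow_two_mul_add_div_factorial (k := 1) hx (by norm_num; linarith))
    (summable_pow_two_mul_add_div_factorial (x := x) 1) n
  simpa only [sin_eq_tsum, mul_div_assoc] using this

theorem abs_cos_sub_sum_le {x : ℝ} (hx : 0 ≤ x) (hx2 : x ^ 2 ≤ 2) (n : ℕ) :
    |cos x - ∑ i ∈ range n, (-1) ^ i * x ^ (2 * i) / (2 * i)!| ≤ x ^ (2 * n) / (2 * n)! := by
  have := alternating_series_error_bound _
    (antitone_pow_two_mul_add_div_factorial (k := 0) hx (by norm_num; linarith))
    (summable_pow_two_mul_add_div_factorial (x := x) 0) n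
  simpa only [cos_eq_tsum, mul_div_assoc, add_zero] using this

lemma sin_sub_mul_cos_le {x : ℝ} (hx : 0 ≤ x) (hx2 : x ^ 2 ≤ 2) :
    sin x - x * cos x ≤ x ^ 3 / 3 := by
  have hs := abs_le.1 (abs_sin_sub_sum_le hx (by linarith) 2)
  have hc := abs_le.1 (abs_cos_sub_sum_le hx hx2 3)
  norm_num [sum_range_succ, Nat.factorial] at hs hc
  nlinarith [pow_nonneg hx 5, pow_nonneg hx 7]

lemma sin_mem_Icc_1_2729 : sin 1.2729 ∈ Set.Icc 0.955956 0.955957 := by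
  have h := abs_le.1 (abs_sin_sub_sum_le (x := 1.2729) (by norm_num) (by norm_num) 6)
  norm_num [sum_range_succ, Nat.factorial] at h ⊢
  constructor <;> linarith

lemma cos_mem_Icc_1_2729 : cos 1.2729 ∈ Set.Icc 0.293509 0.293510 := by
  have h := abs_le.1 (abs_cos_sub_sum_le (x := 1.2729) (by norm_num) (by norm_num) 7)
  norm_num [sum_range_succ, Nat.factorial] at h ⊢
  constructor <;> linarith

lemma sin_mem_Icc_1_2730 : sin 1.2730 ∈ Set.Icc 0.955985 0.955986 := by
  have h := abs_le.1 (abs_sin_sub_sum_le (x := 1.2730) (by norm_num) (by norm_num) 6)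
  norm_num [sum_range_succ, Nat.factorial] at h ⊢
  constructor <;> linarith

lemma cos_mem_Icc_1_2730 : cos 1.2730 ∈ Set.Icc 0.293414 0.293415 := by
  have h := abs_le.1 (abs_cos_sub_sum_le (x := 1.2730) (by norm_num) (by norm_num) 7)
  norm_num [sum_range_succ, Nat.factorial] at h ⊢
  constructor <;> linarith

noncomputable def sinCotDefect (θ : ℝ) : ℝ := 2 * sin θ ^ 3 - 3 * sin θ + 3 * θ * cos θ

lemma sinCotDefect_pos_1_2729 : 0 < sinCotDefect 1.2729 := by
  obtain ⟨hs, -⟩ := sin_mem_Icc_1_2729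
  obtain ⟨hc, -⟩ := cos_mem_Icc_1_2729
  unfold sinCotDefect
  nlinarith [mul_nonneg (sub_nonneg.2 hs) (sub_nonneg.2 hs)]

lemma sinCotDefect_neg_1_2730 : sinCotDefect 1.2730 < 0 := by
  obtain ⟨hsl, hsu⟩ := sin_mem_Icc_1_2730
  obtain ⟨-, hc⟩ := cos_mem_Icc_1_2730
  unfold sinCotDefect
  nlinarith [mul_nonneg (sub_nonneg.2 hsu) (sub_nonneg.2 hsl)]

lemma sinCotDefect_eq_zero_iff {θ : ℝ} (h : sin θ ≠ 0) :
    sin θ ^ 2 = 3 / 2 * (1 - θ * (cos θ / sin θ)) ↔ sinCotDefect θ = 0 := by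
  unfold sinCotDefect
  field_simp
  constructor <;> intro h <;> linear_combination h

lemma continuous_sinCotDefect : Continuous sinCotDefect := by
  unfold sinCotDefect; fun_prop

lemma hasDerivAt_sinCotDefect (θ : ℝ) :
    HasDerivAt sinCotDefect (3 * sin θ * (sin (2 * θ) - θ)) θ := by
  have h := ((((hasDerivAt_sin θ).pow 3).const_mul 2).sub ((hasDerivAt_sin θ).const_mul 3)).add
    (((hasDerivAt_id' θ).const_mul 3).mul (hasDerivAt_cos θ))
  exact h.congr_deriv (by rw [sin_two_mul]; push_cast; ring)

lemma sinCotDefect_pos {θ : ℝ} (h0 : 0 < θ) (h1 : θ ≤ 1) : 0 < sinCotDefect θ := by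
  have hsc := sin_sub_mul_cos_le h0.le (by nlinarith)
  have hfactor : 5 / 6 ≤ 1 - θ ^ 2 / 6 := by nlinarith
  have hcube : (θ - θ ^ 3 / 6) ^ 3 ≤ sin θ ^ 3 :=
    pow_le_pow_left₀ (by nlinarith) (sin_ge_sub_cube h0.le) 3
  have hpoly : θ ^ 3 < 2 * (θ - θ ^ 3 / 6) ^ 3 := by
    rw [show θ - θ ^ 3 / 6 = θ * (1 - θ ^ 2 / 6) by ring, mul_pow]
    nlinarith [pow_le_pow_left₀ (by norm_num) hfactor 3, pow_pos h0 3]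
  unfold sinCotDefect
  linarith

lemma strictAntiOn_sinCotDefect : StrictAntiOn sinCotDefect (Set.Icc 1 (π / 2)) := by
  refine strictAntiOn_of_deriv_neg (convex_Icc _ _) continuous_sinCotDefect.continuousOn
    fun x hx ↦ ?_
  rw [interior_Icc] at hx
  rw [(hasDerivAt_sinCotDefect x).deriv]
  have hsin : 0 < sin x := sin_pos_of_pos_of_lt_pi (by linarith [hx.1]) (by linarith [hx.2, pi_pos])
  have := sin_le_one (2 * x)
  nlinarith [hx.1]

theorem stmt_19 :
    ∃ θ : ℝ, (θ ∈ Set.Ioo 0 (Real.pi / 2) ∧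
        Real.sin θ ^ 2 = 3 / 2 * (1 - θ * (Real.cos θ / Real.sin θ))) ∧
      (∀ θ' : ℝ, θ' ∈ Set.Ioo 0 (Real.pi / 2) →
        Real.sin θ' ^ 2 = 3 / 2 * (1 - θ' * (Real.cos θ' / Real.sin θ')) → θ' = θ) ∧
      1.2729 < θ ∧ θ < 1.2730 := by
  have hsin : ∀ θ ∈ Set.Ioo 0 (π / 2), sin θ ≠ 0 := fun θ hθ ↦
    (sin_pos_of_pos_of_lt_pi hθ.1 (by linarith [hθ.2, pi_pos])).ne'
  obtain ⟨θ, ⟨ha, hb⟩, hθ⟩ := intermediate_value_Ioo' (by norm_num)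
    continuous_sinCotDefect.continuousOn ⟨sinCotDefect_neg_1_2730, sinCotDefect_pos_1_2729⟩
  have hθI : θ ∈ Set.Ioo 0 (π / 2) := ⟨by linarith, by linarith [pi_gt_d6]⟩
  refine ⟨θ, ⟨hθI, (sinCotDefect_eq_zero_iff (hsin θ hθI)).2 hθ⟩, fun θ' hθ' h ↦ ?_, ha, hb⟩
  rw [sinCotDefect_eq_zero_iff (hsin θ' hθ')] at h
  have h1 : 1 < θ' := not_le.1 fun h1 ↦ (sinCotDefect_pos hθ'.1 h1).ne' h
  exact strictAntiOn_sinCotDefect.injOn ⟨h1.le, hθ'.2.le⟩ ⟨by linarith, hθI.2.le⟩ (h.trans hθ.symm)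
end
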